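/- Let λ₁, λ₂, λ₃ > 0 and let g be the corresponding inner product on m. Let U: m × m → m be the unique symmetric bilinear map satisfying 2g(U(X,Y), Z) = g(X, [Z,Y]_m) + g([Z,X]_m, Y) for all X, Y, Z ∈ m. Then U(X,Y) = 0 whenever X, Y ∈ m_j for some j ∈ {1,2,3}, and U(X,Y) = −(2λ_j)^{−1}(λ_{j+1} − λ_{j+2})[X,Y] whenever X ∈ m_{j+1} and Y ∈ m_{j+2}, where j = 1, 2, 3 and indices are reduced modulo 3. (This computes the Levi-Civita connection of the invariant metric g = (λ₁,λ₂,λ₃) on the flag manifold SU(3)/T_max.) -/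

import Mathlib

open ComplexConjugate Matrix

noncomputable section

/-- The matrix D(a,b,c) ∈ su(3): zero diagonal, X₁₂ = a, X₂₁ = −conj a,
X₂₃ = b, X₃₂ = −conj b, X₁₃ = conj c, X₃₁ = −c. -/
def Dm (a b c : ℂ) : Matrix (Fin 3) (Fin 3) ℂ :=
  !![0, a, conj c; -conj a, 0, b; -c, -conj b, 0]

/-- The real Lie algebra su(3) of traceless skew-Hermitian 3×3 complex
matrices (as a set of matrices, with bracket [X,Y] = XY − YX). -/
def su3 : Set (Matrix (Fin 3) (Fin 3) ℂ) :=
  {X | Xᴴ = -X ∧ X.trace = 0}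

/-- h: the diagonal matrices in su(3). -/
def hSet : Set (Matrix (Fin 3) (Fin 3) ℂ) :=
  {X | X ∈ su3 ∧ ∀ i j, i ≠ j → X i j = 0}

/-- m = {D(a,b,c)}. -/
def mSet : Set (Matrix (Fin 3) (Fin 3) ℂ) :=
  {X | ∃ a b c : ℂ, X = Dm a b c}

/-- The three components m₁, m₂, m₃ of m. -/
def mComp : Fin 3 → Set (Matrix (Fin 3) (Fin 3) ℂ) :=
  ![{X | ∃ a : ℂ, X = Dm a 0 0}, {X | ∃ b : ℂ, X = Dm 0 b 0},
    {X | ∃ c : ℂ, X = Dm 0 0 c}]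

/-- ⟨X,Y⟩₀ = −½ Re tr(XY). -/
def inner0 (X Y : Matrix (Fin 3) (Fin 3) ℂ) : ℝ :=
  -(1 / 2) * ((X * Y).trace).re

end

noncomputable section

/-- The m-component of a matrix in su(3) = h ⊕ m (h the diagonal part):
zero out the diagonal. -/
def projm (Z : Matrix (Fin 3) (Fin 3) ℂ) : Matrix (Fin 3) (Fin 3) ℂ :=
  Z - Matrix.diagonal fun i => Z i i

/-- Projections of m onto its components m₁, m₂, m₃. -/
def mProj : Fin 3 → (Matrix (Fin 3) (Fin 3) ℂ → Matrix (Fin 3) (Fin 3) ℂ) :=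
  ![fun X => Dm (X 0 1) 0 0, fun X => Dm 0 (X 1 2) 0, fun X => Dm 0 0 (-(X 2 0))]

/-- The invariant metric g = (λ₁,λ₂,λ₃): g(X,Y) = Σ_j λ_j ⟨X_j, Y_j⟩₀ for
X, Y ∈ m, where X_j is the m_j-component; m₁, m₂, m₃ are mutually
orthogonal. -/
def gmet (lam : Fin 3 → ℝ) (X Y : Matrix (Fin 3) (Fin 3) ℂ) : ℝ :=
  ∑ j : Fin 3, lam j * inner0 (mProj j X) (mProj j Y)

end

/-!
The metric g is positive definite on m, so the Koszul identity determines U(X,Y) ∈ m from its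
g-products with all Z ∈ m. For X = D(a,b,c), Y = D(p,q,r), Z = D(s,t,u), comparing the
coefficients of s, t, u on both sides gives U(X,Y) in closed form (`leviCivitaDm`). Both claims
are specialisations of it: on m_j × m_j every product in the formula vanishes, and on
m_{j+1} × m_{j+2} the bracket already lies in m_j and the formula is a multiple of it.
-/

open Complex

lemma gmet_Dm (lam : Fin 3 → ℝ) (a b c p q r : ℂ) :
    gmet lam (Dm a b c) (Dm p q r) =
      lam 0 * (a * conj p).re + lam 1 * (b * conj q).re + lam 2 * (c * conj r).re := by
  simp only [gmet, Fin.sum_univ_three]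
  simp [inner0, mProj, Dm, Matrix.trace_fin_three, mul_re, Matrix.vecHead, Matrix.vecTail]
  ring

lemma lie_Dm (a b c p q r : ℂ) :
    ⁅Dm a b c, Dm p q r⁆ =
      Dm (conj (b * r - c * q)) (conj (c * p - a * r)) (conj (a * q - p * b)) +
        diagonal ![conj a * p - a * conj p + c * conj r - conj c * r,
          a * conj p - conj a * p + conj b * q - b * conj q,
          b * conj q - conj b * q + conj c * r - c * conj r] := by
  ext i j
  fin_cases i <;> fin_cases j <;> simp [Dm, Ring.lie_def, diagonal] <;> ring

lemma projm_lie_Dm (a b c p q r : ℂ) :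
    projm ⁅Dm a b c, Dm p q r⁆ =
      Dm (conj (b * r - c * q)) (conj (c * p - a * r)) (conj (a * q - p * b)) := by
  ext i j
  fin_cases i <;> fin_cases j <;> simp [projm, Dm, Ring.lie_def, diagonal] <;> ring

lemma Dm_zero : Dm 0 0 0 = 0 := by
  ext i j
  fin_cases i <;> fin_cases j <;> simp [Dm]

lemma neg_Dm (a b c : ℂ) : -Dm a b c = Dm (-a) (-b) (-c) := by
  ext i j
  fin_cases i <;> fin_cases j <;> simp [Dm]

lemma smul_Dm (s : ℝ) (a b c : ℂ) : s • Dm a b c = Dm (s * a) (s * b) (s * c) := by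
  ext i j
  fin_cases i <;> fin_cases j <;> simp [Dm, Complex.real_smul]

lemma Dm_eq_of_forall_gmet_eq {lam : Fin 3 → ℝ} (hlam : ∀ j, 0 < lam j) {u v w a b c : ℂ}
    (h : ∀ p q r, gmet lam (Dm u v w) (Dm p q r) = gmet lam (Dm a b c) (Dm p q r)) :
    Dm u v w = Dm a b c := by
  have normSq_sub (x y : ℂ) :
      normSq (x - y) = (x * conj (x - y)).re - (y * conj (x - y)).re := by
    rw [← sub_re, ← sub_mul, mul_conj, ofReal_re]
  have hsum : lam 0 * normSq (u - a) + lam 1 * normSq (v - b) + lam 2 * normSq (w - c) = 0 := by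
    have := h (u - a) (v - b) (w - c)
    rw [gmet_Dm, gmet_Dm] at this
    rw [normSq_sub, normSq_sub, normSq_sub]
    linear_combination this
  have n0 := mul_nonneg (hlam 0).le (normSq_nonneg (u - a))
  have n1 := mul_nonneg (hlam 1).le (normSq_nonneg (v - b))
  have n2 := mul_nonneg (hlam 2).le (normSq_nonneg (w - c))
  have eq_of {l : ℝ} (hl : 0 < l) {x y : ℂ} (hxy : l * normSq (x - y) = 0) : x = y :=
    sub_eq_zero.mp (normSq_eq_zero.mp ((mul_eq_zero.mp hxy).resolve_left hl.ne'))
  rw [eq_of (hlam 0) (x := u) (y := a) (by linarith), eq_of (hlam 1) (x := v) (y := b) (by linarith),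
    eq_of (hlam 2) (x := w) (y := c) (by linarith)]

lemma eq_of_koszul {lam : Fin 3 → ℝ} (hlam : ∀ j, 0 < lam j)
    {U : Matrix (Fin 3) (Fin 3) ℂ → Matrix (Fin 3) (Fin 3) ℂ → Matrix (Fin 3) (Fin 3) ℂ}
    (hUmem : ∀ X ∈ mSet, ∀ Y ∈ mSet, U X Y ∈ mSet)
    (hUdef : ∀ X ∈ mSet, ∀ Y ∈ mSet, ∀ Z ∈ mSet,
      2 * gmet lam (U X Y) Z = gmet lam X (projm ⁅Z, Y⁆) + gmet lam (projm ⁅Z, X⁆) Y)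
    {X Y W : Matrix (Fin 3) (Fin 3) ℂ} (hX : X ∈ mSet) (hY : Y ∈ mSet) (hW : W ∈ mSet)
    (hWdef : ∀ Z ∈ mSet,
      2 * gmet lam W Z = gmet lam X (projm ⁅Z, Y⁆) + gmet lam (projm ⁅Z, X⁆) Y) :
    U X Y = W := by
  obtain ⟨u, v, w, hU⟩ := hUmem X hX Y hY
  obtain ⟨a, b, c, rfl⟩ := hW
  rw [hU]
  refine Dm_eq_of_forall_gmet_eq hlam fun p q r => ?_
  have h := hUdef X hX Y hY _ ⟨p, q, r, rfl⟩
  rw [hU, ← hWdef _ ⟨p, q, r, rfl⟩] at h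
  linarith

noncomputable def leviCivitaDm (lam : Fin 3 → ℝ) (a b c p q r : ℂ) : Matrix (Fin 3) (Fin 3) ℂ :=
  Dm (((lam 2 - lam 1) / (2 * lam 0) : ℝ) * conj (b * r + c * q))
    (((lam 0 - lam 2) / (2 * lam 1) : ℝ) * conj (c * p + a * r))
    (((lam 1 - lam 0) / (2 * lam 2) : ℝ) * conj (a * q + b * p))

lemma koszul_leviCivitaDm {lam : Fin 3 → ℝ} (hlam : ∀ j, lam j ≠ 0) (a b c p q r s t u : ℂ) :
    2 * gmet lam (leviCivitaDm lam a b c p q r) (Dm s t u) =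
      gmet lam (Dm a b c) (projm ⁅Dm s t u, Dm p q r⁆) +
        gmet lam (projm ⁅Dm s t u, Dm a b c⁆) (Dm p q r) := by
  simp only [leviCivitaDm, projm_lie_Dm, gmet_Dm, conj_conj, mul_assoc, re_ofReal_mul,
    ← map_mul, conj_re]
  have := hlam 0; have := hlam 1; have := hlam 2
  simp only [mul_re, add_re, sub_re, mul_im, add_im, sub_im]
  field_simp
  ring

lemma eq_leviCivitaDm {lam : Fin 3 → ℝ} (hlam : ∀ j, 0 < lam j)
    {U : Matrix (Fin 3) (Fin 3) ℂ → Matrix (Fin 3) (Fin 3) ℂ → Matrix (Fin 3) (Fin 3) ℂ}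
    (hUmem : ∀ X ∈ mSet, ∀ Y ∈ mSet, U X Y ∈ mSet)
    (hUdef : ∀ X ∈ mSet, ∀ Y ∈ mSet, ∀ Z ∈ mSet,
      2 * gmet lam (U X Y) Z = gmet lam X (projm ⁅Z, Y⁆) + gmet lam (projm ⁅Z, X⁆) Y)
    (a b c p q r : ℂ) :
    U (Dm a b c) (Dm p q r) = leviCivitaDm lam a b c p q r := by
  refine eq_of_koszul hlam hUmem hUdef ⟨a, b, c, rfl⟩ ⟨p, q, r, rfl⟩ ⟨_, _, _, rfl⟩ ?_
  rintro _ ⟨s, t, u, rfl⟩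
  exact koszul_leviCivitaDm (fun j => (hlam j).ne') a b c p q r s t u

theorem stmt_9_general (lam : Fin 3 → ℝ) (hlam : ∀ j, 0 < lam j)
    (U : Matrix (Fin 3) (Fin 3) ℂ → Matrix (Fin 3) (Fin 3) ℂ →
      Matrix (Fin 3) (Fin 3) ℂ)
    (hUmem : ∀ X ∈ mSet, ∀ Y ∈ mSet, U X Y ∈ mSet)
    (hUdef : ∀ X ∈ mSet, ∀ Y ∈ mSet, ∀ Z ∈ mSet,
      2 * gmet lam (U X Y) Z =
        gmet lam X (projm ⁅Z, Y⁆) + gmet lam (projm ⁅Z, X⁆) Y) :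
    (∀ j : Fin 3, ∀ X ∈ mComp j, ∀ Y ∈ mComp j, U X Y = 0) ∧
    (∀ j : Fin 3, ∀ X ∈ mComp (j + 1), ∀ Y ∈ mComp (j + 2),
      U X Y = (-(2 * lam j)⁻¹ * (lam (j + 1) - lam (j + 2))) • ⁅X, Y⁆) := by
  constructor
  · intro j X hX Y hY
    fin_cases j <;> obtain ⟨x, rfl⟩ := hX <;> obtain ⟨y, rfl⟩ := hY <;>
      simp [eq_leviCivitaDm hlam hUmem hUdef, leviCivitaDm, Dm_zero]
  · intro j X hX Y hY
    fin_cases j <;> obtain ⟨x, rfl⟩ := hX <;> obtain ⟨y, rfl⟩ := hY <;>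
      simp [eq_leviCivitaDm hlam hUmem hUdef, leviCivitaDm, lie_Dm, ← Matrix.zero_empty,
        Matrix.cons_zero_zero, smul_Dm, neg_Dm] <;>
      congr 1 <;> ring

/-- The Levi-Civita connection of the invariant metric g = (λ₁,λ₂,λ₃) on the
flag manifold SU(3)/T_max: the symmetric map U determined by
2g(U(X,Y),Z) = g(X,[Z,Y]_m) + g([Z,X]_m,Y) vanishes on m_j × m_j and equals
−(2λ_j)⁻¹(λ_{j+1} − λ_{j+2})[X,Y] on m_{j+1} × m_{j+2} (indices mod 3). -/
theorem stmt_9 (lam : Fin 3 → ℝ) (hlam : ∀ j, 0 < lam j)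
    (U : Matrix (Fin 3) (Fin 3) ℂ → Matrix (Fin 3) (Fin 3) ℂ →
      Matrix (Fin 3) (Fin 3) ℂ)
    (hUmem : ∀ X ∈ mSet, ∀ Y ∈ mSet, U X Y ∈ mSet)
    (hUsymm : ∀ X ∈ mSet, ∀ Y ∈ mSet, U X Y = U Y X)
    (hUdef : ∀ X ∈ mSet, ∀ Y ∈ mSet, ∀ Z ∈ mSet,
      2 * gmet lam (U X Y) Z =
        gmet lam X (projm ⁅Z, Y⁆) + gmet lam (projm ⁅Z, X⁆) Y) :
    (∀ j : Fin 3, ∀ X ∈ mComp j, ∀ Y ∈ mComp j, U X Y = 0) ∧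
    (∀ j : Fin 3, ∀ X ∈ mComp (j + 1), ∀ Y ∈ mComp (j + 2),
      U X Y = (-(2 * lam j)⁻¹ * (lam (j + 1) - lam (j + 2))) • ⁅X, Y⁆) :=
  stmt_9_general lam hlam U hUmem hUdef
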